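/- arXiv:1011.0275 — 5 statements merged into one kernel-verified Lean document; each statement's English description precedes it below -/
import Mathlib

section
/- Let π be a non-crossing partition of {1,...,k} and K(π) its Kreweras complement. For distinct i,j in {1,...,k}, the pair {i,j} is a block of K(π) if and only if i ~_π j+1, i+1 ~_π j, and i is not ~_π j (indices modulo k), where ~_π means belonging to the same block of π. -/
/-- A relation on a linearly ordered type is non-crossing if there are no
`i < j < l < m` with `i ~ l`, `j ~ m` and `¬ i ~ j`. -/
def NonCrossingRel {α : Type*} [LinearOrder α] (r : α → α → Prop) : Prop :=
  ∀ i j l m : α, i < j → j < l → l < m → r i l → r j m → r i j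

/-- The union of a partition `π` of the "minus" points `1⁻ < 2⁻ < ⋯ < k⁻`
(encoded as even elements of `Fin (2*k)`) and a partition `σ` of the "plus"
points `1⁺ < ⋯ < k⁺` (odd elements), with the interleaved order
`1⁻ < 1⁺ < 2⁻ < 2⁺ < ⋯ < k⁻ < k⁺`. -/
def unionRel {k : ℕ} (π σ : Fin k → Fin k → Prop) (u v : Fin (2 * k)) : Prop :=
  (u.val % 2 = 0 ∧ v.val % 2 = 0 ∧
    π ⟨u.val / 2, by omega⟩ ⟨v.val / 2, by omega⟩) ∨
  (u.val % 2 = 1 ∧ v.val % 2 = 1 ∧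
    σ ⟨u.val / 2, by omega⟩ ⟨v.val / 2, by omega⟩)

/-- `σ` is the Kreweras complement of `π`: it is the coarsest partition of the
plus points such that the union of `π` and `σ` is non-crossing. -/
def IsKrewerasComplement {k : ℕ} (π σ : Fin k → Fin k → Prop) : Prop :=
  Equivalence σ ∧ NonCrossingRel σ ∧ NonCrossingRel (unionRel π σ) ∧
    ∀ τ : Fin k → Fin k → Prop, Equivalence τ → NonCrossingRel τ →
      NonCrossingRel (unionRel π τ) → ∀ i j, τ i j → σ i j


namespace KrewerasAux

variable {k : ℕ}

theorem vmk {n m : ℕ} (h : m < n) : (⟨m, h⟩ : Fin n).val = m := rfl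

def D (x z : Fin k) : ℕ :=
  if x.val < z.val then z.val - x.val - 1 else z.val + (k - 1) - x.val

def mem (x y z : Fin k) : Prop := D x z ≤ D x y

lemma D_lt (x z : Fin k) : D x z < k := by
  have hx := x.isLt; have hz := z.isLt
  unfold D; split_ifs <;> omega

lemma D_self (x : Fin k) : D x x = k - 1 := by
  have hx := x.isLt; unfold D; split_ifs <;> omega

lemma D_inj (x : Fin k) {a b : Fin k} (h : D x a = D x b) : a = b := by
  have hx := x.isLt; have ha := a.isLt; have hb := b.isLt
  unfold D at h
  apply Fin.ext
  split_ifs at h <;> omega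

lemma val_add_one [NeZero k] (z : Fin k) :
    (z + 1).val = if z.val + 1 = k then 0 else z.val + 1 := by
  have hz := z.isLt
  have h1 : (1 : Fin k).val = 1 % k := Fin.val_one' k
  have h := Fin.val_add z 1
  rw [h1] at h
  rcases Nat.lt_or_ge 1 k with hk | hk
  · have h2 : 1 % k = 1 := Nat.mod_eq_of_lt hk
    rw [h2] at h
    split_ifs with hzk
    · rw [h, hzk, Nat.mod_self]
    · rw [h, Nat.mod_eq_of_lt (by omega)]
  · have hk1 : k = 1 := by omega
    subst hk1
    have hz0 : z.val = 0 := by omega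
    have hz1 : (z + 1).val = 0 := by omega
    simp [hz0, hz1]

lemma D_succ_self [NeZero k] (x : Fin k) : D x (x + 1) = 0 := by
  have hx := x.isLt
  have h := val_add_one x
  unfold D; split_ifs with h1 <;> split_ifs at h <;> omega

lemma D_succ [NeZero k] {x z : Fin k} (h : z ≠ x) : D x (z + 1) = D x z + 1 := by
  have hx := x.isLt; have hz := z.isLt
  have hne : z.val ≠ x.val := fun hh => h (Fin.ext hh)
  have hv := val_add_one z
  unfold D; split_ifs at hv ⊢ <;> omega

lemma mem_self (x z : Fin k) : mem x x z := by
  have h1 := D_lt x z; have h2 := D_self x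
  unfold mem; omega

lemma mem_symm {x y : Fin k} (h : x ≠ y) (z : Fin k) : mem y x z ↔ ¬ mem x y z := by
  have hx := x.isLt; have hy := y.isLt; have hz := z.isLt
  have hne : x.val ≠ y.val := fun hh => h (Fin.ext hh)
  unfold mem D; split_ifs <;> omega

lemma mem_trans_iff {x y z : Fin k} (hxy : x ≠ y) (hyz : y ≠ z) (w : Fin k) :
    mem x z w ↔ ((mem x z y ∧ (mem x y w ∨ mem y z w)) ∨
      (¬ mem x z y ∧ mem x y w ∧ mem y z w)) := by
  have hx := x.isLt; have hy := y.isLt; have hz := z.isLt; have hw := w.isLt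
  have h1 : x.val ≠ y.val := fun hh => hxy (Fin.ext hh)
  have h2 : y.val ≠ z.val := fun hh => hyz (Fin.ext hh)
  unfold mem D; split_ifs <;> omega

lemma mem_nc {x y z w : Fin k} (hxy : x.val < y.val) (hyz : y.val < z.val)
    (hzw : z.val < w.val) (c : Fin k) :
    mem x y c ↔ (mem x z c ∧ ¬ (mem y w c ∧ mem x z c)) := by
  have hx := x.isLt; have hy := y.isLt; have hz := z.isLt
  have hw := w.isLt; have hc := c.isLt
  unfold mem D; split_ifs <;> omega

def tau (π : Fin k → Fin k → Prop) (x y : Fin k) : Prop :=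
  ∀ a b, π a b → (mem x y a ↔ mem x y b)

lemma tau_equiv (π : Fin k → Fin k → Prop) : Equivalence (tau π) := by
  constructor
  · intro x a b _
    exact iff_of_true (mem_self x a) (mem_self x b)
  · intro x y h a b hab
    by_cases hxy : x = y
    · subst hxy; exact iff_of_true (mem_self x a) (mem_self x b)
    · rw [mem_symm hxy a, mem_symm hxy b]
      exact not_congr (h a b hab)
  · intro x y z h1 h2 a b hab
    by_cases hxy : x = y
    · subst hxy; exact h2 a b hab
    by_cases hyz : y = z
    · subst hyz; exact h1 a b hab
    have e1 := h1 a b hab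
    have e2 := h2 a b hab
    rw [mem_trans_iff hxy hyz a, mem_trans_iff hxy hyz b]
    tauto

lemma tau_nc (π : Fin k → Fin k → Prop) : NonCrossingRel (tau π) := by
  intro x y z w hxy hyz hzw h13 h24 a b hab
  have e1 := h13 a b hab
  have e2 := h24 a b hab
  rw [Fin.lt_def] at hxy hyz hzw
  rw [mem_nc hxy hyz hzw a, mem_nc hxy hyz hzw b]
  tauto

lemma circ4 {π : Fin k → Fin k → Prop} (hπ : Equivalence π) (hπnc : NonCrossingRel π)
    (x p q r s : Fin k) (h1 : D x p < D x q) (h2 : D x q < D x r) (h3 : D x r < D x s)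
    (hpr : π p r) (hqs : π q s) : π p q := by
  have hx := x.isLt; have hp := p.isLt; have hq := q.isLt
  have hr := r.isLt; have hs := s.isLt
  unfold D at h1 h2 h3
  split_ifs at h1 h2 h3 <;>
  first
    | exact hπnc p q r s (Fin.lt_def.mpr (by omega)) (Fin.lt_def.mpr (by omega))
        (Fin.lt_def.mpr (by omega)) hpr hqs
    | exact hπ.trans (hπ.symm (hπnc s p q r (Fin.lt_def.mpr (by omega))
        (Fin.lt_def.mpr (by omega)) (Fin.lt_def.mpr (by omega)) (hπ.symm hqs) hpr))
        (hπ.symm hqs)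
    | exact hπ.trans (hπ.trans hpr (hπnc r s p q (Fin.lt_def.mpr (by omega))
        (Fin.lt_def.mpr (by omega)) (Fin.lt_def.mpr (by omega)) (hπ.symm hpr)
        (hπ.symm hqs))) (hπ.symm hqs)
    | exact hπ.trans hpr (hπ.symm (hπnc q r s p (Fin.lt_def.mpr (by omega))
        (Fin.lt_def.mpr (by omega)) (Fin.lt_def.mpr (by omega)) hqs (hπ.symm hpr)))
    | omega

lemma union_nc (π : Fin k → Fin k → Prop) (hπnc : NonCrossingRel π) :
    NonCrossingRel (unionRel π (tau π)) := by
  intro u1 u2 u3 u4 h12 h23 h34 h13 h24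
  have b1 := u1.isLt; have b2 := u2.isLt; have b3 := u3.isLt; have b4 := u4.isLt
  have l12 : u1.val < u2.val := Fin.lt_def.mp h12
  have l23 : u2.val < u3.val := Fin.lt_def.mp h23
  have l34 : u3.val < u4.val := Fin.lt_def.mp h34
  rcases h13 with ⟨e1, e3, hp13⟩ | ⟨o1, o3, ht13⟩ <;>
    rcases h24 with ⟨e2, e4, hp24⟩ | ⟨o2, o4, ht24⟩
  · left
    refine ⟨e1, e2, ?_⟩
    exact hπnc _ _ _ _ (Fin.lt_def.mpr (by simp only [vmk]; omega))
      (Fin.lt_def.mpr (by simp only [vmk]; omega))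
      (Fin.lt_def.mpr (by simp only [vmk]; omega)) hp13 hp24
  · exfalso
    have h := ht24 _ _ hp13
    unfold mem D at h
    simp only [vmk] at h
    split_ifs at h <;> omega
  · exfalso
    have h := ht13 _ _ hp24
    unfold mem D at h
    simp only [vmk] at h
    split_ifs at h <;> omega
  · right
    refine ⟨o1, o2, ?_⟩
    exact tau_nc π _ _ _ _ (Fin.lt_def.mpr (by simp only [vmk]; omega))
      (Fin.lt_def.mpr (by simp only [vmk]; omega))
      (Fin.lt_def.mpr (by simp only [vmk]; omega)) ht13 ht24

lemma cross_mixed {π σ : Fin k → Fin k → Prop}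
    (hnc : NonCrossingRel (unionRel π σ)) {x y a b : Fin k}
    (hσxy : σ x y) (hπab : π a b)
    (h1 : x.val < a.val) (h2 : a.val ≤ y.val) (h3 : y.val < b.val) : False := by
  have hx := x.isLt; have hy := y.isLt; have ha := a.isLt; have hb := b.isLt
  have h := hnc ⟨2*x.val+1, by omega⟩ ⟨2*a.val, by omega⟩ ⟨2*y.val+1, by omega⟩
    ⟨2*b.val, by omega⟩ (Fin.lt_def.mpr (by simp only [vmk]; omega))
    (Fin.lt_def.mpr (by simp only [vmk]; omega))
    (Fin.lt_def.mpr (by simp only [vmk]; omega))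
    (Or.inr ⟨by simp only [vmk]; omega, by simp only [vmk]; omega,
      by convert hσxy using 2 <;>
        first
          | (apply Fin.ext; simp only [vmk]; omega)
          | (simp only [vmk]; omega)
          | omega⟩)
    (Or.inl ⟨by simp only [vmk]; omega, by simp only [vmk]; omega,
      by convert hπab using 2 <;>
        first
          | (apply Fin.ext; simp only [vmk]; omega)
          | (simp only [vmk]; omega)
          | omega⟩)
  rcases h with ⟨hh, _, _⟩ | ⟨_, hh, _⟩ <;> simp only [vmk] at hh <;> omega

lemma cross_mixed' {π σ : Fin k → Fin k → Prop}
    (hnc : NonCrossingRel (unionRel π σ)) {x y a b : Fin k}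
    (hσxy : σ x y) (hπba : π b a)
    (h1 : b.val ≤ x.val) (h2 : x.val < a.val) (h3 : a.val ≤ y.val) : False := by
  have hx := x.isLt; have hy := y.isLt; have ha := a.isLt; have hb := b.isLt
  have h := hnc ⟨2*b.val, by omega⟩ ⟨2*x.val+1, by omega⟩ ⟨2*a.val, by omega⟩
    ⟨2*y.val+1, by omega⟩ (Fin.lt_def.mpr (by simp only [vmk]; omega))
    (Fin.lt_def.mpr (by simp only [vmk]; omega))
    (Fin.lt_def.mpr (by simp only [vmk]; omega))
    (Or.inl ⟨by simp only [vmk]; omega, by simp only [vmk]; omega,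
      by convert hπba using 2 <;>
        first
          | (apply Fin.ext; simp only [vmk]; omega)
          | (simp only [vmk]; omega)
          | omega⟩)
    (Or.inr ⟨by simp only [vmk]; omega, by simp only [vmk]; omega,
      by convert hσxy using 2 <;>
        first
          | (apply Fin.ext; simp only [vmk]; omega)
          | (simp only [vmk]; omega)
          | omega⟩)
  rcases h with ⟨_, hh, _⟩ | ⟨hh, _, _⟩ <;> simp only [vmk] at hh <;> omega

lemma sigma_sub {π σ : Fin k → Fin k → Prop} (hπ : Equivalence π) (hσe : Equivalence σ)
    (hnc : NonCrossingRel (unionRel π σ)) :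
    ∀ x y a b, σ x y → π a b → mem x y a → mem x y b := by
  intro x y a b hxy hab hma
  by_contra hmb
  by_cases hxey : x = y
  · subst hxey; exact hmb (mem_self x b)
  have hx := x.isLt; have hy := y.isLt; have ha := a.isLt; have hb := b.isLt
  have hvne : x.val ≠ y.val := fun hh => hxey (Fin.ext hh)
  unfold mem D at hma hmb
  split_ifs at hma hmb <;>
  first
    | omega
    | exact cross_mixed hnc hxy hab (by omega) (by omega) (by omega)
    | exact cross_mixed' hnc hxy (hπ.symm hab) (by omega) (by omega) (by omega)
    | exact cross_mixed hnc (hσe.symm hxy) (hπ.symm hab) (by omega) (by omega) (by omega)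
    | exact cross_mixed' hnc (hσe.symm hxy) hab (by omega) (by omega) (by omega)

lemma sigma_eq_tau {π σ : Fin k → Fin k → Prop} (hπ : Equivalence π)
    (hπnc : NonCrossingRel π) (hσ : IsKrewerasComplement π σ) (x y : Fin k) :
    σ x y ↔ tau π x y := by
  obtain ⟨hσe, hσnc, hunc, hmax⟩ := hσ
  constructor
  · intro h a b hab
    exact ⟨fun hm => sigma_sub hπ hσe hunc x y a b h hab hm,
           fun hm => sigma_sub hπ hσe hunc x y b a h (hπ.symm hab) hm⟩
  · intro h
    exact hmax (tau π) (tau_equiv π) (tau_nc π) (union_nc π hπnc) x y h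

lemma core [NeZero k] {π : Fin k → Fin k → Prop} (hπ : Equivalence π)
    (hπnc : NonCrossingRel π) {i j : Fin k} (hij : i ≠ j)
    (hτij : tau π i j) (hmax : ∀ l, tau π i l → l = i ∨ l = j) : π (i + 1) j := by
  classical
  obtain ⟨m, hm, hmmax⟩ : ∃ m, π (i+1) m ∧ ∀ z, π (i+1) z → D i z ≤ D i m := by
    obtain ⟨m, hm1, hm2⟩ := Finset.exists_max_image
      (Finset.univ.filter fun z => π (i+1) z) (D i)
      ⟨i+1, Finset.mem_filter.mpr ⟨Finset.mem_univ _, hπ.refl _⟩⟩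
    exact ⟨m, (Finset.mem_filter.mp hm1).2,
      fun z hz => hm2 z (Finset.mem_filter.mpr ⟨Finset.mem_univ _, hz⟩)⟩
  have hsub : ∀ z, π (i+1) z → D i z ≤ D i j := by
    intro z hz
    have h0 : mem i j (i+1) := by unfold mem; rw [D_succ_self]; exact Nat.zero_le _
    exact (hτij (i+1) z hz).mp h0
  have hmj : D i m ≤ D i j := hsub m hm
  have hone : ∀ a b, π a b → mem i m a → mem i m b := by
    intro a b hab hma
    by_contra hmb
    unfold mem at hma hmb
    push_neg at hmb
    rcases Nat.eq_zero_or_pos (D i a) with h0 | hpos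
    · have ha1 : a = i + 1 := D_inj i (h0.trans (D_succ_self i).symm)
      exact absurd (hmmax b (ha1 ▸ hab)) (by omega)
    · rcases eq_or_lt_of_le hma with heq | hlt
      · have ham : a = m := D_inj i heq
        exact absurd (hmmax b (hπ.trans hm (ham ▸ hab))) (by omega)
      · have hpa : π (i+1) a := circ4 hπ hπnc i (i+1) a m b
          (by rw [D_succ_self]; omega) hlt (by omega) hm hab
        exact absurd (hmmax b (hπ.trans hpa hab)) (by omega)
  have hτim : tau π i m := fun a b hab => ⟨hone a b hab, hone b a (hπ.symm hab)⟩
  rcases hmax m hτim with rfl | rfl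
  · exfalso
    have h := hsub m hm
    rw [D_self] at h
    have hj := D_lt m j
    exact hij (D_inj m (show D m j = D m m by rw [D_self]; omega)).symm
  · exact hm

lemma pair_block_iff [NeZero k] {π : Fin k → Fin k → Prop} (hπ : Equivalence π)
    (hπnc : NonCrossingRel π) {i j : Fin k} (hij : i ≠ j) :
    (tau π i j ∧ ∀ l, tau π i l → l = i ∨ l = j) ↔
      (π i (j + 1) ∧ π (i + 1) j ∧ ¬ π i j) := by
  have hdj := D_lt i j
  have hdjne : D i j ≠ k - 1 := fun h => hij (D_inj i (h.trans (D_self i).symm)).symm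
  constructor
  · rintro ⟨h1, h2⟩
    have hτe := tau_equiv (k := k) π
    have hne : ¬ π i j := by
      intro hpij
      have h := (h1 i j hpij).mpr (le_refl (D i j) : mem i j j)
      have hds := D_self i
      unfold mem at h
      omega
    refine ⟨?_, core hπ hπnc hij h1 h2, hne⟩
    have hmax' : ∀ l, tau π j l → l = j ∨ l = i := by
      intro l hl
      rcases h2 l (hτe.trans h1 hl) with h | h
      · exact Or.inr h
      · exact Or.inl h
    exact hπ.symm (core hπ hπnc hij.symm (hτe.symm h1) hmax')
  · rintro ⟨hij1, h1j, hnij⟩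
    have hdj1 : D i (j+1) = D i j + 1 := D_succ hij.symm
    have htij : tau π i j := by
      have hone : ∀ a b, π a b → mem i j a → mem i j b := by
        intro a b hab hma
        by_contra hmb
        unfold mem at hma hmb
        push_neg at hmb
        have hda := D_lt i a
        have hdb := D_lt i b
        have hstep1 : π (i+1) b := by
          rcases Nat.eq_zero_or_pos (D i a) with h0 | hpos
          · have ha1 : a = i + 1 := D_inj i (h0.trans (D_succ_self i).symm)
            exact ha1 ▸ hab
          · rcases eq_or_lt_of_le hma with heq | hlt
            · have haj : a = j := D_inj i heq
              exact hπ.trans h1j (haj ▸ hab)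
            · exact hπ.trans (circ4 hπ hπnc i (i+1) a j b
                (by rw [D_succ_self]; omega) hlt (by omega) h1j hab) hab
        by_cases hbi : b = i
        · exact hnij (hπ.trans (hπ.symm (hbi ▸ hstep1)) h1j)
        by_cases hbj1 : b = j + 1
        · exact hnij (hπ.trans (hπ.trans hij1 (hπ.symm (hbj1 ▸ hstep1))) h1j)
        · have hne1 : D i b ≠ D i j + 1 := fun h => hbj1 (D_inj i (h.trans hdj1.symm))
          have hne2 : D i b ≠ k - 1 := fun h => hbi (D_inj i (h.trans (D_self i).symm))
          have h4 : π (i+1) (j+1) := circ4 hπ hπnc i (i+1) (j+1) b i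
            (by rw [D_succ_self, hdj1]; omega) (by rw [hdj1]; omega)
            (by rw [D_self]; omega) hstep1 (hπ.symm hij1)
          exact hnij (hπ.trans (hπ.trans hij1 (hπ.symm h4)) h1j)
      exact fun a b hab => ⟨hone a b hab, hone b a (hπ.symm hab)⟩
    refine ⟨htij, ?_⟩
    intro l hl
    by_contra hcon
    push_neg at hcon
    obtain ⟨hli, hlj⟩ := hcon
    have hdl := D_lt i l
    have hlne : D i l ≠ k - 1 := fun h => hli (D_inj i (h.trans (D_self i).symm))
    have hlnej : D i l ≠ D i j := fun h => hlj (D_inj i h)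
    rcases Nat.lt_or_ge (D i l) (D i j) with hlt | hge
    · have h := (hl (i+1) j h1j).mp (by unfold mem; rw [D_succ_self]; omega)
      unfold mem at h
      omega
    · have h := (hl i (j+1) hij1).mpr (by unfold mem; rw [hdj1]; omega)
      unfold mem at h
      rw [D_self] at h
      omega

end KrewerasAux

/-- For a non-crossing partition `π` of `{1, …, k}` with Kreweras complement `σ`,
the pair `{i, j}` (with `i ≠ j`) is a block of `σ` iff `i ~_π j+1`, `i+1 ~_π j`
and `¬ i ~_π j` (indices mod `k`). -/
theorem kreweras_pair {k : ℕ} [NeZero k] (π σ : Fin k → Fin k → Prop)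
    (hπ : Equivalence π) (hπnc : NonCrossingRel π)
    (hσ : IsKrewerasComplement π σ) (i j : Fin k) (hij : i ≠ j) :
    (σ i j ∧ ∀ l : Fin k, σ i l → l = i ∨ l = j) ↔
      (π i (j + 1) ∧ π (i + 1) j ∧ ¬ π i j) := by
  have hστ := fun x y => KrewerasAux.sigma_eq_tau hπ hπnc hσ x y
  rw [← KrewerasAux.pair_block_iff hπ hπnc hij]
  constructor
  · rintro ⟨h1, h2⟩
    exact ⟨(hστ i j).mp h1, fun l hl => h2 l ((hστ i l).mpr hl)⟩
  · rintro ⟨h1, h2⟩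
    exact ⟨(hστ i j).mpr h1, fun l hl => h2 l ((hστ i l).mp hl)⟩
end

section
/- Let (a,c) ∈ ℕ^k × ℕ^k be a pair of multi-indices satisfying the Wishart matching condition. Then #a + #c ≤ d_W(a,c) + 1 ≤ k + 1, where #a denotes the number of distinct values among a_1,...,a_k, and d_W(a,c) is the number of distinct couples appearing in the list (a_1,c_1),(a_2,c_1),(a_2,c_2),(a_3,c_2),...,(a_k,c_k),(a_1,c_k). -/
/-!
Read `a₁ c₁ a₂ c₂ … a_k c_k a₁` as a walk in the bipartite graph on `ℕ ⊕ ℕ` whose edges are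
the couples of the Wishart list. It visits all `#a + #c` vertices, and each newly reached
vertex is entered along a new edge, so there are at most `d_W(a,c) + 1` of them. The matching
condition says that each of the `2k` positions of the list shares its couple with another
position, so `d_W(a,c) ≤ k`.
-/

/-- The cyclic Wishart list of `2k` couples
`(a₁,c₁), (a₂,c₁), (a₂,c₂), (a₃,c₂), …, (a_k,c_k), (a₁,c_k)`,
indexed by `Fin k × Bool`: position `(i, false)` carries `(aᵢ, cᵢ)` and
position `(i, true)` carries `(aᵢ₊₁, cᵢ)` (indices mod `k`). -/
def wlist {k : ℕ} [NeZero k] (a c : Fin k → ℕ) (q : Fin k × Bool) : ℕ × ℕ :=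
  if q.2 then (a (q.1 + 1), c q.1) else (a q.1, c q.1)

/-- The Wishart matching condition: every couple appears an even number of times
in the Wishart list. -/
def WishartMatching {k : ℕ} [NeZero k] (a c : Fin k → ℕ) : Prop :=
  ∀ p : ℕ × ℕ, Even (Nat.card {q : Fin k × Bool // wlist a c q = p})

/-- `#a`, the number of distinct values among the coordinates of `a`. -/
def numDistinct {k : ℕ} (a : Fin k → ℕ) : ℕ := (Finset.univ.image a).card

/-- `d_W(a,c)`, the number of distinct couples in the Wishart list. -/
def dW {k : ℕ} [NeZero k] (a c : Fin k → ℕ) : ℕ :=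
  (Finset.univ.image (wlist a c)).card

open Finset

theorem card_image_range_succ_le_card_steps_add_one {V : Type*} [DecidableEq V]
    (v : ℕ → V) (n : ℕ) :
    #((range (n + 1)).image v) ≤ #((range n).image fun i => s(v i, v (i + 1))) + 1 := by
  induction n with
  | zero => simp
  | succ n ih =>
    rw [range_add_one (n := n + 1), image_insert]
    by_cases hold : v (n + 1) ∈ (range (n + 1)).image v
    · rw [insert_eq_of_mem hold]
      exact ih.trans (by gcongr; omega)
    · have hnew : s(v n, v (n + 1)) ∉ (range n).image fun i => s(v i, v (i + 1)) := by
        intro hmem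
        obtain ⟨j, hj, hje⟩ := mem_image.1 hmem
        have hmem' : v (n + 1) ∈ s(v j, v (j + 1)) := hje ▸ Sym2.mem_mk_right _ _
        rw [mem_range] at hj
        rcases Sym2.mem_iff.1 hmem' with h | h
        · exact hold (mem_image.2 ⟨j, mem_range.2 (by omega), h.symm⟩)
        · exact hold (mem_image.2 ⟨j + 1, mem_range.2 (by omega), h.symm⟩)
      have hsteps : #((range (n + 1)).image fun i => s(v i, v (i + 1)))
          = #((range n).image fun i => s(v i, v (i + 1))) + 1 := by
        rw [range_add_one, image_insert, card_insert_of_notMem hnew]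
      rw [card_insert_of_notMem hold, hsteps]
      omega

theorem two_mul_card_image_le_of_even_card_fiber {α β : Type*} [Fintype α] [DecidableEq β]
    (f : α → β) (h : ∀ b, Even #{x | f x = b}) : 2 * #(univ.image f) ≤ Fintype.card α := by
  refine card_univ (α := α) ▸ mul_card_image_le_card univ 2 fun b hb => ?_
  obtain ⟨x, -, hx⟩ := mem_image.1 hb
  have hpos : 0 < #{x | f x = b} := card_pos.2 ⟨x, by simpa using hx⟩
  obtain ⟨m, hm⟩ := h b
  omega

section WishartWalk

open Fin.NatCast

variable {k : ℕ} [NeZero k] (a c : Fin k → ℕ)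

def wishartWalk (n : ℕ) : ℕ ⊕ ℕ :=
  if Even n then .inl (a (n / 2 : ℕ)) else .inr (c (n / 2 : ℕ))

def coupleEdge (p : ℕ × ℕ) : Sym2 (ℕ ⊕ ℕ) := s(.inl p.1, .inr p.2)

theorem wishartWalk_two_mul (m : ℕ) : wishartWalk a c (2 * m) = .inl (a m) := by
  simp [wishartWalk]

theorem wishartWalk_two_mul_add_one (m : ℕ) : wishartWalk a c (2 * m + 1) = .inr (c m) := by
  simp [wishartWalk, show (2 * m + 1) / 2 = m by omega]

theorem wishartWalk_step_mem (n : ℕ) :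
    s(wishartWalk a c n, wishartWalk a c (n + 1)) ∈ univ.image (coupleEdge ∘ wlist a c) := by
  obtain ⟨m, rfl | rfl⟩ := Nat.even_or_odd' n
  · refine mem_image.2 ⟨(m, false), mem_univ _, ?_⟩
    simp [coupleEdge, wlist, wishartWalk_two_mul, wishartWalk_two_mul_add_one]
  · refine mem_image.2 ⟨(m, true), mem_univ _, ?_⟩
    rw [show 2 * m + 1 + 1 = 2 * (m + 1) by ring, wishartWalk_two_mul,
      wishartWalk_two_mul_add_one, Sym2.eq_swap]
    simp [coupleEdge, wlist]

theorem card_wishartWalk_steps_le_dW (n : ℕ) :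
    #((range n).image fun i => s(wishartWalk a c i, wishartWalk a c (i + 1))) ≤ dW a c :=
  calc _ ≤ #(univ.image (coupleEdge ∘ wlist a c)) :=
        card_le_card fun _ hp => by
          obtain ⟨i, -, rfl⟩ := mem_image.1 hp
          exact wishartWalk_step_mem a c i
    _ ≤ dW a c := by
        rw [dW, ← image_image]
        exact card_image_le

theorem numDistinct_add_numDistinct_le_card_wishartWalk :
    numDistinct a + numDistinct c ≤ #((range (2 * k)).image (wishartWalk a c)) := by
  rw [numDistinct, numDistinct, ← card_disjSum]
  refine card_le_card fun x hx => ?_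
  rcases x with x | x
  · obtain ⟨i, -, rfl⟩ := mem_image.1 (inl_mem_disjSum.1 hx)
    exact mem_image.2 ⟨2 * i, mem_range.2 (by omega), by simp [wishartWalk_two_mul]⟩
  · obtain ⟨i, -, rfl⟩ := mem_image.1 (inr_mem_disjSum.1 hx)
    exact mem_image.2 ⟨2 * i + 1, mem_range.2 (by omega), by simp [wishartWalk_two_mul_add_one]⟩

theorem dW_le_of_wishartMatching {a c : Fin k → ℕ} (h : WishartMatching a c) : dW a c ≤ k := by
  have h2 := two_mul_card_image_le_of_even_card_fiber (wlist a c) fun p => by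
    simpa only [Nat.card_eq_fintype_card, Fintype.card_subtype] using h p
  rw [Fintype.card_prod, Fintype.card_fin, Fintype.card_bool] at h2
  rw [dW]
  omega

end WishartWalk

/-- If `(a,c)` satisfies the Wishart matching condition then
`#a + #c ≤ d_W(a,c) + 1 ≤ k + 1`. -/
theorem wishart_matching_bound {k : ℕ} [NeZero k] (a c : Fin k → ℕ)
    (h : WishartMatching a c) :
    numDistinct a + numDistinct c ≤ dW a c + 1 ∧ dW a c + 1 ≤ k + 1 := by
  refine ⟨?_, Nat.add_le_add_right (dW_le_of_wishartMatching h) 1⟩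
  have hk : 2 * k = 2 * k - 1 + 1 := by have := NeZero.pos k; omega
  calc numDistinct a + numDistinct c ≤ #((range (2 * k)).image (wishartWalk a c)) :=
        numDistinct_add_numDistinct_le_card_wishartWalk a c
    _ ≤ _ := hk ▸ card_image_range_succ_le_card_steps_add_one _ _
    _ ≤ dW a c + 1 := Nat.add_le_add_right (card_wishartWalk_steps_le_dW a c _) 1
end

section
/- If ρ is a separable state on ℂ^d ⊗ ℂ^d (a convex combination of tensor products of states), then its partial transpose ρ^Γ = (Id ⊗ T)(ρ) is positive semidefinite. -/
open Matrix Kronecker ComplexOrder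

/-- The partial transposition `(A^Γ)_{i,j}^{k,l} = A_{i,j}^{l,k}`, i.e.
`A^Γ = (Id ⊗ T)(A)` where `T` is transposition on the second factor. -/
def partialTranspose {d : ℕ} (A : Matrix (Fin d × Fin d) (Fin d × Fin d) ℂ) :
    Matrix (Fin d × Fin d) (Fin d × Fin d) ℂ :=
  Matrix.of fun p q => A (p.1, q.2) (q.1, p.2)

/- Partial transposition is linear and sends `σ ⊗ τ` to `σ ⊗ τᵀ`; since transposition preserves
positive semidefiniteness, a separable state is mapped to a nonnegative combination of Kronecker
products of positive semidefinite matrices, which is positive semidefinite. -/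

section PartialTranspose

variable {d : ℕ}

theorem partialTranspose_kronecker (A B : Matrix (Fin d) (Fin d) ℂ) :
    partialTranspose (A ⊗ₖ B) = A ⊗ₖ Bᵀ := by
  ext ⟨i, j⟩ ⟨k, l⟩
  simp [partialTranspose, kroneckerMap_apply]

theorem partialTranspose_smul (c : ℂ) (A : Matrix (Fin d × Fin d) (Fin d × Fin d) ℂ) :
    partialTranspose (c • A) = c • partialTranspose A := by
  ext
  simp [partialTranspose]

theorem partialTranspose_sum {ι : Type*} (s : Finset ι)
    (A : ι → Matrix (Fin d × Fin d) (Fin d × Fin d) ℂ) :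
    partialTranspose (∑ i ∈ s, A i) = ∑ i ∈ s, partialTranspose (A i) := by
  ext
  simp [partialTranspose, Matrix.sum_apply]

end PartialTranspose

theorem separable_state_ppt_general (d m : ℕ)
    (p : Fin m → ℝ) (σ τ : Fin m → Matrix (Fin d) (Fin d) ℂ)
    (hp : ∀ i, 0 ≤ p i)
    (hσ : ∀ i, (σ i).PosSemidef)
    (hτ : ∀ i, (τ i).PosSemidef)
    (ρ : Matrix (Fin d × Fin d) (Fin d × Fin d) ℂ)
    (hρ : ρ = ∑ i, (p i : ℂ) • (σ i ⊗ₖ τ i)) :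
    (partialTranspose ρ).PosSemidef := by
  simp only [hρ, partialTranspose_sum, partialTranspose_smul, partialTranspose_kronecker]
  exact posSemidef_sum _ fun i _ =>
    ((hσ i).kronecker (hτ i).transpose).smul (Complex.zero_le_real.mpr (hp i))

/-- Peres: the partial transpose of a separable state on `ℂ^d ⊗ ℂ^d` is
positive semidefinite. A separable state is a finite convex combination
`∑ pᵢ σᵢ ⊗ τᵢ` of tensor products of states (positive semidefinite, trace 1). -/
theorem separable_state_ppt (d m : ℕ)
    (p : Fin m → ℝ) (σ τ : Fin m → Matrix (Fin d) (Fin d) ℂ)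
    (hp : ∀ i, 0 ≤ p i) (hpsum : ∑ i, p i = 1)
    (hσ : ∀ i, (σ i).PosSemidef) (hστr : ∀ i, (σ i).trace = 1)
    (hτ : ∀ i, (τ i).PosSemidef) (hτtr : ∀ i, (τ i).trace = 1)
    (ρ : Matrix (Fin d × Fin d) (Fin d × Fin d) ℂ)
    (hρ : ρ = ∑ i, (p i : ℂ) • (σ i ⊗ₖ τ i)) :
    (partialTranspose ρ).PosSemidef :=
  separable_state_ppt_general d m p σ τ hp hσ hτ ρ hρ
end

section
/- Let (a,b,c) ∈ ℕ^k × ℕ^k × ℕ^k satisfy the triple matching condition, with (a,b) non-repeating. Then no value appears exactly once among c_1,...,c_k; in particular #c ≤ ⌊k/2⌋. -/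
/-- The cyclic list of `2k` triples
`(a₁,b₂,c₁), (a₂,b₁,c₁), (a₂,b₃,c₂), (a₃,b₂,c₂), …, (a_k,b₁,c_k), (a₁,b_k,c_k)`,
indexed by `Fin k × Bool`: position `(i, false)` carries `(aᵢ, bᵢ₊₁, cᵢ)` and
position `(i, true)` carries `(aᵢ₊₁, bᵢ, cᵢ)` (indices mod `k`). -/
def tlist {k : ℕ} [NeZero k] (a b c : Fin k → ℕ) (q : Fin k × Bool) : ℕ × ℕ × ℕ :=
  if q.2 then (a (q.1 + 1), b q.1, c q.1) else (a q.1, b (q.1 + 1), c q.1)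

/-- The triple matching condition: every triple appears an even number of times
in the list. -/
def TripleMatching {k : ℕ} [NeZero k] (a b c : Fin k → ℕ) : Prop :=
  ∀ p : ℕ × ℕ × ℕ, Even (Nat.card {q : Fin k × Bool // tlist a b c q = p})

/-- `(a,b)` is non-repeating if `(aᵢ, bᵢ) ≠ (aᵢ₊₁, bᵢ₊₁)` for all `i` (mod `k`). -/
def NonRepeating {k : ℕ} [NeZero k] (a b : Fin k → ℕ) : Prop :=
  ∀ i : Fin k, (a i, b i) ≠ (a (i + 1), b (i + 1))

/-- If `(a,b,c)` satisfies the triple matching condition with `(a,b)`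
non-repeating, then no value appears exactly once among `c₁, …, c_k`; in
particular `#c ≤ ⌊k/2⌋`. -/
theorem no_single_c_index {k : ℕ} [NeZero k] (a b c : Fin k → ℕ)
    (hm : TripleMatching a b c) (hnr : NonRepeating a b) :
    (∀ i : Fin k, ∃ j : Fin k, j ≠ i ∧ c j = c i) ∧ numDistinct c ≤ k / 2 := by
  have hc : ∀ q : Fin k × Bool, (tlist a b c q).2.2 = c q.1 := by
    intro q; unfold tlist; split <;> rfl
  have h1 : ∀ i : Fin k, ∃ j : Fin k, j ≠ i ∧ c j = c i := by
    intro i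
    by_contra h
    push_neg at h
    set p := tlist a b c (i, false) with hp
    have key := hm p
    rw [Nat.card_eq_fintype_card, Fintype.card_subtype] at key
    set S := Finset.filter (fun q => tlist a b c q = p) Finset.univ with hS
    have huniq : ∀ q : Fin k × Bool, tlist a b c q = p → q.1 = i := by
      intro q hq
      have hcq : c q.1 = c i := by
        have := congrArg (fun t => t.2.2) hq
        simpa [hc, hp] using this
      by_contra hne
      exact h q.1 hne hcq
    have hmem : (i, false) ∈ S := by simp [hS, hp]
    have htrue : (i, true) ∈ S := by
      by_contra ht
      have hsing : S = {(i, false)} := by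
        apply Finset.eq_singleton_iff_unique_mem.mpr
        refine ⟨hmem, fun q hq => ?_⟩
        have hq' : tlist a b c q = p := by simpa [hS] using hq
        have hq1 : q.1 = i := huniq q hq'
        rcases q with ⟨j, bo⟩
        simp only at hq1
        subst hq1
        cases bo
        · rfl
        · exact absurd hq ht
      rw [hsing, Finset.card_singleton] at key
      exact Nat.not_even_one key
    have heq : tlist a b c (i, true) = p := by simpa [hS] using htrue
    rw [hp] at heq
    simp [tlist, Prod.mk.injEq] at heq
    exact hnr i (by rw [Prod.mk.injEq]; exact ⟨heq.1.symm, heq.2⟩)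
  refine ⟨h1, ?_⟩
  have hsum : (Finset.univ : Finset (Fin k)).card =
      ∑ v ∈ Finset.univ.image c, (Finset.univ.filter (fun i => c i = v)).card :=
    Finset.card_eq_sum_card_fiberwise (fun x _ => Finset.mem_image_of_mem c (Finset.mem_univ x))
  have h2 : ∀ v ∈ Finset.univ.image c, 2 ≤ (Finset.univ.filter (fun i => c i = v)).card := by
    intro v hv
    obtain ⟨i, -, hi⟩ := Finset.mem_image.mp hv
    obtain ⟨j, hji, hj⟩ := h1 i
    have hsub : ({j, i} : Finset (Fin k)) ⊆ Finset.univ.filter (fun x => c x = v) := by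
      intro x hx
      simp only [Finset.mem_insert, Finset.mem_singleton] at hx
      rcases hx with rfl | rfl
      · simp [hj.trans hi]
      · simp [hi]
    calc 2 = ({j, i} : Finset (Fin k)).card := by
            rw [Finset.card_insert_of_notMem (by simpa using hji), Finset.card_singleton]
      _ ≤ _ := Finset.card_le_card hsub
  have h3 : 2 * numDistinct c ≤ k := by
    calc 2 * numDistinct c = ∑ _v ∈ Finset.univ.image c, 2 := by
          simp [numDistinct, mul_comm]
      _ ≤ ∑ v ∈ Finset.univ.image c, (Finset.univ.filter (fun i => c i = v)).card :=
          Finset.sum_le_sum h2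
      _ = k := by rw [← hsum]; simp
  omega
end

section
/- Let (a,b,c) ∈ ℕ^k × ℕ^k × ℕ^k satisfy the triple matching condition with (a,b) non-repeating. Then #a + #b ≤ 2(⌊k/2⌋ + 1), where #a denotes the number of distinct values among the coordinates of a. -/
open Module Submodule TensorProduct

section RankBound

variable {K V ι : Type*} [Field K] [AddCommGroup V] [Module K V]

variable (K) in
def dualCoeffs (u : ι → V) : Dual K V →ₗ[K] ι → K :=
  LinearMap.pi fun i => Dual.eval K V (u i)

variable [Fintype ι]

theorem finrank_range_dualCoeffs (u : ι → V) :
    finrank K (LinearMap.range (dualCoeffs K u)) = finrank K (span K (Set.range u)) := by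
  classical
  have : dualCoeffs K u =
      (Pi.basisFun K ι).dualBasis.equivFun.toLinearMap ∘ₗ
        (Fintype.linearCombination K u).dualMap := by
    ext φ i
    simp [dualCoeffs]
  rw [this, LinearMap.range_comp, LinearEquiv.finrank_map_eq,
    LinearMap.finrank_range_dualMap_eq_finrank_range, Fintype.range_linearCombination]

theorem range_dualCoeffs_le_ker {u v : ι → V} (h : ∑ i, u i ⊗ₜ[K] v i = 0) :
    LinearMap.range (dualCoeffs K u) ≤ LinearMap.ker (Fintype.linearCombination K v) := by
  rintro _ ⟨φ, rfl⟩
  have := congr_arg (TensorProduct.lid K V ∘ LinearMap.rTensor V φ) h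
  simpa [dualCoeffs, Fintype.linearCombination_apply] using this

theorem finrank_span_add_finrank_ker_linearCombination (v : ι → V) :
    finrank K (span K (Set.range v)) + finrank K (LinearMap.ker (Fintype.linearCombination K v))
      = Fintype.card ι := by
  rw [← Fintype.range_linearCombination, LinearMap.finrank_range_add_finrank_ker,
    Module.finrank_fintype_fun_eq_card]

theorem finrank_span_add_finrank_span_le_of_sum_tmul_eq_zero {u v : ι → V}
    (h : ∑ i, u i ⊗ₜ[K] v i = 0) :
    finrank K (span K (Set.range u)) + finrank K (span K (Set.range v)) ≤ Fintype.card ι := by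
  rw [← finrank_range_dualCoeffs (K := K) u,
    ← finrank_span_add_finrank_ker_linearCombination (K := K) v, add_comm]
  gcongr
  exact Submodule.finrank_mono (range_dualCoeffs_le_ker h)

theorem finrank_span_add_finrank_span_lt_of_sum_tmul_eq_zero {u v : ι → V}
    (h : ∑ i, u i ⊗ₜ[K] v i = 0) (hu : ∑ i, u i = 0) (hv : ∑ i, v i = 0)
    (hι : (Fintype.card ι : K) ≠ 0) :
    finrank K (span K (Set.range u)) + finrank K (span K (Set.range v)) < Fintype.card ι := by
  rw [← finrank_range_dualCoeffs (K := K) u,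
    ← finrank_span_add_finrank_ker_linearCombination (K := K) v, add_comm]
  gcongr
  refine Submodule.finrank_lt_finrank_of_lt
    (SetLike.lt_iff_le_and_exists.mpr ⟨range_dualCoeffs_le_ker h, fun _ => 1, ?_, ?_⟩)
  · simpa [Fintype.linearCombination_apply] using hv
  · rintro ⟨φ, hφ⟩
    apply hι
    have := congr_arg (fun w : ι → K => ∑ i, w i) hφ
    simpa [dualCoeffs, ← map_sum, hu] using this.symm

end RankBound

theorem finrank_span_add_finrank_span_le_two_mul_div_two {V ι : Type*} [AddCommGroup V]
    [Module (ZMod 2) V] [Fintype ι] {u v : ι → V} (h : ∑ i, u i ⊗ₜ[ZMod 2] v i = 0)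
    (hu : ∑ i, u i = 0) (hv : ∑ i, v i = 0) :
    finrank (ZMod 2) (span (ZMod 2) (Set.range u)) +
      finrank (ZMod 2) (span (ZMod 2) (Set.range v)) ≤ 2 * (Fintype.card ι / 2) := by
  rcases Nat.even_or_odd (Fintype.card ι) with heven | hodd
  · have := finrank_span_add_finrank_span_le_of_sum_tmul_eq_zero h
    rw [Nat.even_iff] at heven
    omega
  · have := finrank_span_add_finrank_span_lt_of_sum_tmul_eq_zero h hu hv
      (by rwa [Ne, ZMod.natCast_eq_zero_iff_even, Nat.not_even_iff_odd])
    rw [Nat.odd_iff] at hodd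
    omega

section Cyclic

open Fin.NatCast

variable {k : ℕ} [NeZero k]

theorem sum_add_apply_add_one {M : Type*} [AddCommMonoid M] (f : Fin k → M) :
    ∑ i, (f i + f (i + 1)) = ∑ i, f i + ∑ i, f i := by
  rw [Finset.sum_add_distrib,
    Fintype.sum_equiv (Equiv.addRight 1) (fun i => f (i + 1)) f fun _ => rfl]

theorem sum_add_tmul_add {R M N : Type*} [CommSemiring R] [AddCommMonoid M] [Module R M]
    [AddCommMonoid N] [Module R N] (x : Fin k → M) (y : Fin k → N) :
    ∑ i, (x i + x (i + 1)) ⊗ₜ[R] (y i + y (i + 1)) =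
      (∑ i, x i ⊗ₜ[R] y i + ∑ i, x i ⊗ₜ[R] y i) +
        ∑ i, (x i ⊗ₜ[R] y (i + 1) + x (i + 1) ⊗ₜ[R] y i) := by
  rw [← sum_add_apply_add_one, ← Finset.sum_add_distrib]
  refine Finset.sum_congr rfl fun i _ => ?_
  simp only [add_tmul, tmul_add]
  abel

theorem finrank_span_le_finrank_span_add_apply_add_one {K V : Type*} [Field K] [AddCommGroup V]
    [Module K V] (f : Fin k → V) :
    finrank K (span K (Set.range f)) ≤
      finrank K (span K (Set.range fun i => f i + f (i + 1))) + 1 := by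
  have := FiniteDimensional.span_of_finite K (Set.finite_range fun i => f i + f (i + 1))
  set P := span K (Set.range fun i => f i + f (i + 1)) ⊔ span K {f 0}
  have hmem (n : ℕ) : f n ∈ P := by
    induction n with
    | zero => exact mem_sup_right (mem_span_singleton_self _)
    | succ n ih =>
      rw [Nat.cast_succ, show f (n + 1) = (f n + f (n + 1)) - f n by abel]
      exact P.sub_mem (mem_sup_left (subset_span ⟨n, rfl⟩)) ih
  calc finrank K (span K (Set.range f))
      ≤ finrank K P := Submodule.finrank_mono <| span_le.mpr <| by
        rintro _ ⟨i, rfl⟩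
        simpa using hmem i
    _ ≤ finrank K (span K (Set.range fun i => f i + f (i + 1))) + finrank K (span K {f 0}) :=
        Submodule.finrank_add_le_finrank_add_finrank _ _
    _ ≤ _ := by
        gcongr
        simpa using finrank_span_le_card (R := K) {f 0}

end Cyclic

theorem numDistinct_eq_finrank_span {K : Type*} [Field K] {k : ℕ} (a : Fin k → ℕ) :
    numDistinct a = finrank K (span K (Set.range fun i => Finsupp.single (a i) (1 : K))) := by
  have hli := (Finsupp.linearIndependent_single_one K ℕ).comp
    ((↑) : Finset.univ.image a → ℕ) Subtype.val_injective
  have hrange : Set.range ((fun n => Finsupp.single n (1 : K)) ∘ ((↑) : Finset.univ.image a → ℕ))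
      = Set.range fun i => Finsupp.single (a i) (1 : K) := by
    ext
    simp
  rw [numDistinct, ← Fintype.card_coe, ← finrank_span_eq_card hli, hrange]

theorem numDistinct_le_finrank_span_add_one (K : Type*) [Field K] {k : ℕ} [NeZero k]
    (a : Fin k → ℕ) :
    numDistinct a ≤ finrank K (span K (Set.range fun i =>
      Finsupp.single (a i) (1 : K) + Finsupp.single (a (i + 1)) 1)) + 1 :=
  numDistinct_eq_finrank_span (K := K) a ▸ finrank_span_le_finrank_span_add_apply_add_one _

section TripleMatching

variable {k : ℕ} [NeZero k] {a b c : Fin k → ℕ}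

theorem sum_tlist {M : Type*} [AddCommMonoid M] (G : ℕ × ℕ × ℕ → M) :
    ∑ q, G (tlist a b c q) = ∑ i, (G (a i, b (i + 1), c i) + G (a (i + 1), b i, c i)) := by
  rw [Fintype.sum_prod_type]
  simp [tlist, add_comm]

theorem TripleMatching.sum_eq_zero (hm : TripleMatching a b c) {M : Type*} [AddCommGroup M]
    [Module (ZMod 2) M] (G : ℕ × ℕ × ℕ → M) : ∑ q, G (tlist a b c q) = 0 := by
  rw [Finset.sum_comp]
  refine Finset.sum_eq_zero fun p _ => ?_
  obtain ⟨m, hm⟩ := hm p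
  rw [Nat.card_eq_fintype_card, Fintype.card_subtype] at hm
  rw [hm, add_nsmul, ZModModule.add_self]

end TripleMatching

theorem numDistinct_a_add_b_bound_general {k : ℕ} [NeZero k] (a b c : Fin k → ℕ)
    (hm : TripleMatching a b c) :
    numDistinct a + numDistinct b ≤ 2 * (k / 2 + 1) := by
  have hsum (f : Fin k → ℕ) :
      ∑ i, (Finsupp.single (f i) (1 : ZMod 2) + Finsupp.single (f (i + 1)) 1) = 0 := by
    rw [sum_add_apply_add_one, ZModModule.add_self]
  have htensor : ∑ i, (Finsupp.single (a i) (1 : ZMod 2) + Finsupp.single (a (i + 1)) 1) ⊗ₜ[ZMod 2]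
      (Finsupp.single (b i) (1 : ZMod 2) + Finsupp.single (b (i + 1)) 1) = 0 := by
    let G (p : ℕ × ℕ × ℕ) :=
      Finsupp.single p.1 (1 : ZMod 2) ⊗ₜ[ZMod 2] Finsupp.single p.2.1 (1 : ZMod 2)
    rw [sum_add_tmul_add, (sum_tlist (c := c) G).symm.trans (hm.sum_eq_zero G), add_zero]
    exact ZModModule.add_self (G := (ℕ →₀ ZMod 2) ⊗[ZMod 2] (ℕ →₀ ZMod 2)) _
  have hrank := finrank_span_add_finrank_span_le_two_mul_div_two htensor (hsum a) (hsum b)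
  have ha := numDistinct_le_finrank_span_add_one (ZMod 2) a
  have hb := numDistinct_le_finrank_span_add_one (ZMod 2) b
  rw [Fintype.card_fin] at hrank
  omega

/-- If `(a,b,c)` satisfies the triple matching condition with `(a,b)`
non-repeating, then `#a + #b ≤ 2(⌊k/2⌋ + 1)`. -/
theorem numDistinct_a_add_b_bound {k : ℕ} [NeZero k] (a b c : Fin k → ℕ)
    (hm : TripleMatching a b c) (hnr : NonRepeating a b) :
    numDistinct a + numDistinct b ≤ 2 * (k / 2 + 1) :=
  numDistinct_a_add_b_bound_general a b c hm
end
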